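/- arXiv:1511.04874 — 3 statements merged into one kernel-verified Lean document; each statement's English description precedes it below -/
import Mathlib

section
/- Let φ be a convex C¹ function on (a,b) ⊆ ℝ with ψ(s) := s·φ'(s) − φ(s), and let R_a := lim_{s→a⁺} ψ(s), R_b := lim_{s→b⁻} ψ(s). Then for any R ∈ (R_a, R_b) there exists ŝ ∈ (a,b) with ψ(ŝ) = R and sup_{s∈(a,b)} ((s−1)R − φ(s))/s = ((ŝ−1)R − φ(ŝ))/ŝ. -/
/-!
Writing the objective as `((s - 1) * R - φ s) / s = R - (R + φ s) / s`, the choice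
`R = ŝ * φ' ŝ - φ ŝ` turns `R + φ s ≥ φ' ŝ * s` into the tangent-line inequality of `φ`
at `ŝ`. So the objective is bounded by `R - φ' ŝ`, which is its value at `ŝ`. Such an `ŝ`
exists by the intermediate value theorem, as `ψ` is continuous on `(a, b)` with limits
`R_a < R < R_b` at the endpoints.
-/

open Set Filter Topology

theorem ContinuousOn.Ioo_subset_image_Ioo_of_tendsto {α δ : Type*}
    [ConditionallyCompleteLinearOrder α] [TopologicalSpace α] [OrderTopology α] [DenselyOrdered α]
    [LinearOrder δ] [TopologicalSpace δ] [OrderClosedTopology δ] {a b : α} (hab : a < b)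
    {f : α → δ} (hf : ContinuousOn f (Ioo a b))
    {ra rb : δ} (ha : Tendsto f (𝓝[>] a) (𝓝 ra)) (hb : Tendsto f (𝓝[<] b) (𝓝 rb)) :
    Ioo ra rb ⊆ f '' Ioo a b :=
  have := nhdsGT_neBot_of_exists_gt ⟨b, hab⟩
  have := nhdsLT_neBot_of_exists_lt ⟨a, hab⟩
  isPreconnected_Ioo.intermediate_value_Ioo (le_principal_iff.2 (Ioo_mem_nhdsGT hab))
    (le_principal_iff.2 (Ioo_mem_nhdsLT hab)) hf ha hb

theorem ConvexOn.add_deriv_mul_sub_le {S : Set ℝ} {f : ℝ → ℝ} {x y : ℝ}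
    (hf : ConvexOn ℝ S f) (hx : x ∈ S) (hy : y ∈ S) (hfd : DifferentiableAt ℝ f x) :
    f x + deriv f x * (y - x) ≤ f y := by
  rcases lt_trichotomy y x with hyx | rfl | hxy
  · have hslope := hf.slope_le_deriv hy hx hyx hfd
    rw [slope_def_field, div_le_iff₀ (sub_pos.2 hyx)] at hslope
    linarith
  · simp
  · have hslope := hf.deriv_le_slope hx hy hxy hfd
    rw [slope_def_field, le_div_iff₀ (sub_pos.2 hxy)] at hslope
    linarith

theorem div_le_div_of_add_mul_sub_le {φ : ℝ → ℝ} {s t d R : ℝ} (hs : 0 < s) (ht : 0 < t)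
    (htangent : φ t + d * (s - t) ≤ φ s) (hR : t * d - φ t = R) :
    ((s - 1) * R - φ s) / s ≤ ((t - 1) * R - φ t) / t := by
  have hvalue : ((t - 1) * R - φ t) / t = R - d := by
    rw [div_eq_iff ht.ne']
    linarith
  rw [hvalue, div_le_iff₀ hs]
  linarith

/-- Let φ be a convex C¹ function on (a,b) ⊆ ℝ (0 < a < b) with ψ(s) := s·φ'(s) − φ(s),
and let R_a := lim_{s→a⁺} ψ(s), R_b := lim_{s→b⁻} ψ(s). Then for any R ∈ (R_a, R_b)
there exists ŝ ∈ (a,b) with ψ(ŝ) = R and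
sup_{s∈(a,b)} ((s−1)R − φ(s))/s = ((ŝ−1)R − φ(ŝ))/ŝ, the supremum being attained at ŝ. -/
theorem sup_attained (a b : ℝ) (ha : 0 < a) (hab : a < b) (φ : ℝ → ℝ)
    (hconv : ConvexOn ℝ (Set.Ioo a b) φ)
    (hdiff : ∀ s ∈ Set.Ioo a b, DifferentiableAt ℝ φ s)
    (hcont : ContinuousOn (deriv φ) (Set.Ioo a b))
    (Ra Rb : ℝ)
    (hRa : Filter.Tendsto (fun s => s * deriv φ s - φ s) (nhdsWithin a (Set.Ioi a)) (nhds Ra))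
    (hRb : Filter.Tendsto (fun s => s * deriv φ s - φ s) (nhdsWithin b (Set.Iio b)) (nhds Rb))
    (R : ℝ) (hR : R ∈ Set.Ioo Ra Rb) :
    ∃ sh ∈ Set.Ioo a b, sh * deriv φ sh - φ sh = R ∧
      IsGreatest ((fun s => ((s - 1) * R - φ s) / s) '' Set.Ioo a b)
        (((sh - 1) * R - φ sh) / sh) := by
  have hψ : ContinuousOn (fun s => s * deriv φ s - φ s) (Ioo a b) :=
    (continuousOn_id.mul hcont).sub
      (continuousOn_of_forall_continuousAt fun s hs => (hdiff s hs).continuousAt)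
  obtain ⟨sh, hsh, hψsh⟩ := hψ.Ioo_subset_image_Ioo_of_tendsto hab hRa hRb hR
  refine ⟨sh, hsh, hψsh, mem_image_of_mem _ hsh, ?_⟩
  rintro _ ⟨s, hs, rfl⟩
  exact div_le_div_of_add_mul_sub_le (ha.trans hs.1) (ha.trans hsh.1)
    (hconv.add_deriv_mul_sub_le hsh hs (hdiff sh hsh)) hψsh
end

section
/- For probability distributions P, Q on a finite set with P ≪ Q, the first-order Taylor expansion of the Rényi divergence around s = 1 is D_{1+s}(P‖Q) = D(P‖Q) + (s/2)·V(P‖Q) + O(s²) as s → 0, where D is the Kullback–Leibler divergence and V(P‖Q) = Σ_x P(x)(log P(x) − log Q(x) − D(P‖Q))² is the variance of the log-likelihood ratio. -/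
open Finset

/-- g_s(P‖Q) = Σ_{x : P(x)>0} P(x)^s Q(x)^{1−s}. -/
noncomputable def gRenyi {𝒳 : Type*} [Fintype 𝒳] (s : ℝ) (P Q : 𝒳 → ℝ) : ℝ :=
  ∑ x ∈ univ.filter (fun x => 0 < P x), P x ^ s * Q x ^ (1 - s)

/-- Rényi divergence of order s ≠ 1. -/
noncomputable def DRenyi {𝒳 : Type*} [Fintype 𝒳] (s : ℝ) (P Q : 𝒳 → ℝ) : ℝ :=
  (s - 1)⁻¹ * Real.log (gRenyi s P Q)

/-- Kullback–Leibler divergence. -/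
noncomputable def DKL {𝒳 : Type*} [Fintype 𝒳] (P Q : 𝒳 → ℝ) : ℝ :=
  ∑ x ∈ univ.filter (fun x => 0 < P x), P x * (Real.log (P x) - Real.log (Q x))

/-- Variance of the log-likelihood ratio. -/
noncomputable def VLLR {𝒳 : Type*} [Fintype 𝒳] (P Q : 𝒳 → ℝ) : ℝ :=
  ∑ x ∈ univ.filter (fun x => 0 < P x),
    P x * (Real.log (P x) - Real.log (Q x) - DKL P Q) ^ 2

/-! With `L = log P - log Q`, the Rényi divergence is `D_{1+s}(P‖Q) = Λ(s) / s`, where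
`Λ(s) = log 𝔼_P[exp (s L)]` is the cumulant generating function of `L` under `P`. Expanding `exp`
to second order gives `𝔼_P[exp (s L)] = 1 + 𝔼 L · s + 𝔼 L² · s² / 2 + O(s³)`, and expanding
`log (1 + u)` to second order turns this into `Λ(s) = D s + V s² / 2 + O(s³)`: the first two
cumulants are the mean `D` and the variance `V` of `L`. -/

open Real Filter Topology Asymptotics

lemma log_one_sub_add_sum_range_isBigO_pow (n : ℕ) :
    (fun x : ℝ ↦ ∑ i ∈ range n, x ^ (i + 1) / (i + 1) + log (1 - x)) =O[𝓝 0] (· ^ (n + 1)) := by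
  refine .of_bound 2 ?_
  filter_upwards [Metric.ball_mem_nhds (0 : ℝ) one_half_pos] with x hx
  rw [Metric.mem_ball, dist_zero_right, norm_eq_abs] at hx
  rw [norm_eq_abs, norm_eq_abs, abs_pow]
  calc _ ≤ |x| ^ (n + 1) / (1 - |x|) := abs_log_sub_add_sum_range_le (by linarith) n
    _ ≤ |x| ^ (n + 1) / (1 / 2) := by gcongr; linarith
    _ = 2 * |x| ^ (n + 1) := by ring

lemma log_one_add_sub_isBigO_cube :
    (fun u : ℝ ↦ log (1 + u) - (u - u ^ 2 / 2)) =O[𝓝 0] (· ^ 3) := by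
  have h := (log_one_sub_add_sum_range_isBigO_pow 2).comp_tendsto
    (continuous_neg.tendsto' (0 : ℝ) 0 neg_zero)
  refine (h.congr_left fun u ↦ ?_).trans (isBigO_of_le _ fun u ↦ ?_)
  · simp only [Function.comp_apply, sum_range_succ, range_one, sum_singleton, zero_add, pow_one,
      CharP.cast_eq_zero, div_one, Nat.cast_one, sub_neg_eq_add]
    ring
  · simp only [Function.comp_apply, norm_pow, norm_neg, le_refl]

lemma exp_sub_isBigO_cube :
    (fun t : ℝ ↦ exp t - (1 + t + t ^ 2 / 2)) =O[𝓝 0] (· ^ 3) := by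
  refine (exp_sub_sum_range_isBigO_pow 3).congr_left fun t ↦ ?_
  simp [sum_range_succ, Nat.factorial]

lemma log_sub_isBigO_cube_of_isBigO_cube {m : ℝ → ℝ} {a b : ℝ}
    (hm : (fun s ↦ m s - (1 + a * s + b * s ^ 2)) =O[𝓝 0] (· ^ 3)) :
    (fun s ↦ log (m s) - (a * s + (b - a ^ 2 / 2) * s ^ 2)) =O[𝓝 0] (· ^ 3) := by
  set u : ℝ → ℝ := fun s ↦ m s - 1
  have hu₂ : (fun s ↦ u s - a * s) =O[𝓝 0] (· ^ 2) :=
    ((hm.trans (isLittleO_pow_pow (by norm_num)).isBigO).add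
      ((isBigO_refl (· ^ 2) _).const_mul_left b)).congr_left fun s ↦ by ring
  have hsq_isBigO_id : (fun s : ℝ ↦ s ^ 2) =O[𝓝 0] id :=
    (isLittleO_pow_pow (by norm_num : 1 < 2)).isBigO.congr_right pow_one
  have hu₁ : u =O[𝓝 0] id :=
    ((hu₂.trans hsq_isBigO_id).add ((isBigO_refl id _).const_mul_left a)).congr_left
      fun s ↦ by simp
  have hlog : (fun s ↦ log (1 + u s) - (u s - u s ^ 2 / 2)) =O[𝓝 0] (· ^ 3) :=
    (log_one_add_sub_isBigO_cube.comp_tendsto (hu₁.trans_tendsto tendsto_id)).trans (hu₁.pow 3)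
  have hsq : (fun s ↦ u s ^ 2 - a ^ 2 * s ^ 2) =O[𝓝 0] (· ^ 3) :=
    (hu₂.mul (hu₁.add ((isBigO_refl id _).const_mul_left a))).congr
      (fun s ↦ by simp only [id]; ring) fun s ↦ by simp only [id]; ring
  refine ((hlog.add hm).sub (hsq.const_mul_left (1 / 2))).congr_left fun s ↦ ?_
  simp only [u, add_sub_cancel]
  ring

lemma sum_mul_exp_sub_isBigO_cube {ι : Type*} (S : Finset ι) (w a : ι → ℝ) :
    (fun s ↦ ∑ i ∈ S, w i * exp (s * a i) -
      (∑ i ∈ S, w i + (∑ i ∈ S, w i * a i) * s + (∑ i ∈ S, w i * a i ^ 2) / 2 * s ^ 2))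
      =O[𝓝 0] (· ^ 3) := by
  have hterm : ∀ i ∈ S,
      (fun s ↦ w i * (exp (s * a i) - (1 + s * a i + (s * a i) ^ 2 / 2))) =O[𝓝 0] (· ^ 3) :=
    fun i _ ↦ ((exp_sub_isBigO_cube.comp_tendsto ((continuous_mul_const (a i)).tendsto' 0 0
      (zero_mul _))).trans (((isBigO_refl (· ^ 3) _).const_mul_left (a i ^ 3)).congr_left
        fun s ↦ by simp only [Function.comp_apply]; ring)).const_mul_left (w i)
  refine (IsBigO.sum hterm).congr_left fun s ↦ ?_
  simp only [Finset.sum_apply, mul_sub, sum_sub_distrib, sum_mul, sum_div]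
  rw [← sum_add_distrib, ← sum_add_distrib]
  exact congrArg _ (sum_congr rfl fun i _ ↦ by ring)

lemma log_sum_mul_exp_sub_isBigO_cube {ι : Type*} {S : Finset ι} {w : ι → ℝ} (a : ι → ℝ)
    (hw : ∑ i ∈ S, w i = 1) :
    (fun s ↦ log (∑ i ∈ S, w i * exp (s * a i)) -
      ((∑ i ∈ S, w i * a i) * s + (∑ i ∈ S, w i * (a i - ∑ j ∈ S, w j * a j) ^ 2) / 2 * s ^ 2))
      =O[𝓝 0] (· ^ 3) := by
  set μ := ∑ i ∈ S, w i * a i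
  have hvar : ∑ i ∈ S, w i * (a i - μ) ^ 2 = ∑ i ∈ S, w i * a i ^ 2 - μ ^ 2 := by
    rw [sum_congr rfl fun i _ ↦ show w i * (a i - μ) ^ 2 =
        w i * a i ^ 2 - 2 * μ * (w i * a i) + μ ^ 2 * w i by ring,
      sum_add_distrib, sum_sub_distrib, ← mul_sum, ← mul_sum, hw]
    ring
  have hmgf := sum_mul_exp_sub_isBigO_cube S w a
  rw [hw] at hmgf
  refine (log_sub_isBigO_cube_of_isBigO_cube hmgf).congr_left fun s ↦ ?_
  rw [hvar]
  ring

lemma gRenyi_one_add {𝒳 : Type*} [Fintype 𝒳] {P Q : 𝒳 → ℝ} (hQ : ∀ x, 0 < P x → 0 < Q x) (s : ℝ) :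
    gRenyi (1 + s) P Q =
      ∑ x ∈ univ.filter (fun x ↦ 0 < P x), P x * exp (s * (log (P x) - log (Q x))) := by
  refine sum_congr rfl fun x hx ↦ ?_
  have hP : 0 < P x := (mem_filter.mp hx).2
  calc P x ^ (1 + s) * Q x ^ (1 - (1 + s)) = exp (log (P x) + s * (log (P x) - log (Q x))) := by
        rw [rpow_def_of_pos hP, rpow_def_of_pos (hQ x hP), ← exp_add]; ring_nf
    _ = P x * exp (s * (log (P x) - log (Q x))) := by rw [exp_add, exp_log hP]

theorem DRenyi_taylor_at_one_general {𝒳 : Type*} [Fintype 𝒳]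
    (P Q : 𝒳 → ℝ)
    (hP0 : ∀ x, 0 ≤ P x) (hP1 : ∑ x, P x = 1)
    (hQ0 : ∀ x, 0 ≤ Q x)
    (hac : ∀ x, Q x = 0 → P x = 0) :
    (fun s : ℝ => DRenyi (1 + s) P Q - (DKL P Q + s / 2 * VLLR P Q))
      =O[nhdsWithin 0 {0}ᶜ] (fun s : ℝ => s ^ 2) := by
  have hPsum : ∑ x ∈ univ.filter (fun x ↦ 0 < P x), P x = 1 :=
    (sum_filter_of_ne fun x _ h ↦ (hP0 x).lt_of_ne' h).trans hP1
  have hQpos : ∀ x, 0 < P x → 0 < Q x := fun x hP ↦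
    (hQ0 x).lt_of_ne' fun hQ ↦ hP.ne' (hac x hQ)
  have hcgf : (fun s ↦ log (∑ x ∈ univ.filter (fun x ↦ 0 < P x),
      P x * exp (s * (log (P x) - log (Q x)))) - (DKL P Q * s + VLLR P Q / 2 * s ^ 2))
      =O[𝓝 0] (· ^ 3) :=
    log_sum_mul_exp_sub_isBigO_cube _ hPsum
  refine ((isBigO_refl (·⁻¹) _).mul (hcgf.mono nhdsWithin_le_nhds)).congr' ?_ ?_
  all_goals filter_upwards [self_mem_nhdsWithin] with s (hs : s ≠ 0)
  · rw [DRenyi, gRenyi_one_add hQpos, add_sub_cancel_left]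
    field_simp
  · field_simp

/-- First-order Taylor expansion of the Rényi divergence around s = 1:
D_{1+s}(P‖Q) = D(P‖Q) + (s/2)·V(P‖Q) + O(s²) as s → 0. -/
theorem DRenyi_taylor_at_one {𝒳 : Type*} [Fintype 𝒳]
    (P Q : 𝒳 → ℝ)
    (hP0 : ∀ x, 0 ≤ P x) (hP1 : ∑ x, P x = 1)
    (hQ0 : ∀ x, 0 ≤ Q x) (hQ1 : ∑ x, Q x = 1)
    (hac : ∀ x, Q x = 0 → P x = 0) :
    (fun s : ℝ => DRenyi (1 + s) P Q - (DKL P Q + s / 2 * VLLR P Q))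
      =O[nhdsWithin 0 {0}ᶜ] (fun s : ℝ => s ^ 2) :=
  DRenyi_taylor_at_one_general P Q hP0 hP1 hQ0 hac
end

section
/- Fixed points of the alternating optimization are optimal: suppose distributions Q̂_X on 𝒳 and Q̂_Y on 𝒴 satisfy the self-consistency relations Q̂_X(x) ∝ P_X(x) g_s(P_{Y|X=x}‖Q̂_Y)^{1/s} and Q̂_Y(y) ∝ P_Y(y) g_s(P_{X|Y=y}‖Q̂_X)^{1/s} for some s ∈ (1/2,1)∪(1,∞). Then the 2-fold products Q̂_X×Q̂_X and Q̂_Y×Q̂_Y satisfy the corresponding self-consistency relations for the joint distribution P_{XY}^{×2}, and hence min over product alternatives is additive: D_s(P_{XY}^{×2} ‖ 𝒬₂) = 2·min_{Q_X,Q_Y} D_s(P_{XY}‖Q_X×Q_Y), where 𝒬₂ is the set of (2-fold) products of distributions on 𝒳² and 𝒴². -/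
open Finset

lemma gRenyi_pos_eq {𝒳 : Type*} [Fintype 𝒳] (s : ℝ) (P : 𝒳 → ℝ) (Q : 𝒳 → ℝ)
    (hP : ∀ x, 0 < P x) : gRenyi s P Q = ∑ x, P x ^ s * Q x ^ (1 - s) := by
  unfold gRenyi
  rw [Finset.filter_true_of_mem (fun x _ => hP x)]

lemma sum_mul_split {α β : Type*} [Fintype α] [Fintype β] (g1 : α → ℝ) (g2 : β → ℝ) :
    ∑ p : α × β, g1 p.1 * g2 p.2 = (∑ a, g1 a) * (∑ b, g2 b) := by
  rw [Fintype.sum_prod_type, Finset.sum_mul_sum]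

lemma gRenyi_prod {𝒴 𝒵 : Type*} [Fintype 𝒴] [Fintype 𝒵] (s : ℝ)
    {f1 : 𝒴 → ℝ} {f2 : 𝒵 → ℝ} (h1 : ∀ y, 0 < f1 y) (h2 : ∀ z, 0 < f2 z)
    {Q1 : 𝒴 → ℝ} {Q2 : 𝒵 → ℝ} (hQ1 : ∀ y, 0 ≤ Q1 y) (hQ2 : ∀ z, 0 ≤ Q2 z) :
    gRenyi s (fun p : 𝒴 × 𝒵 => f1 p.1 * f2 p.2) (fun p => Q1 p.1 * Q2 p.2)
      = gRenyi s f1 Q1 * gRenyi s f2 Q2 := by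
  rw [gRenyi_pos_eq s (fun p : 𝒴 × 𝒵 => f1 p.1 * f2 p.2) _ (fun p => mul_pos (h1 p.1) (h2 p.2)),
      gRenyi_pos_eq s _ _ h1, gRenyi_pos_eq s _ _ h2, ← sum_mul_split]
  refine Finset.sum_congr rfl (fun p _ => ?_)
  rw [Real.mul_rpow (h1 p.1).le (h2 p.2).le, Real.mul_rpow (hQ1 p.1) (hQ2 p.2)]
  ring

/-- tangent-plane inequality for the jointly concave function (u,v) ↦ uᵗvᵗ, 0 < t ≤ 1/2 -/
lemma tangent {t : ℝ} (ht0 : 0 < t) (ht : t ≤ 1/2) {a b u v : ℝ}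
    (ha : 0 < a) (hb : 0 < b) (hu : 0 ≤ u) (hv : 0 ≤ v) :
    u ^ t * v ^ t ≤ a ^ t * b ^ t + t * (a ^ (t-1) * (u - a)) * b ^ t
      + t * (b ^ (t-1) * (v - b)) * a ^ t := by
  have hp : (0:ℝ) ≤ u / a := div_nonneg hu ha.le
  have hq : (0:ℝ) ≤ v / b := div_nonneg hv hb.le
  have amgm := Real.geom_mean_le_arith_mean3_weighted ht0.le ht0.le
    (by linarith : (0:ℝ) ≤ 1 - 2*t) hp hq zero_le_one (by ring)
  rw [Real.one_rpow, mul_one, mul_one] at amgm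
  -- amgm : (u/a)^t * (v/b)^t ≤ t*(u/a) + t*(v/b) + (1-2t)
  have hab : 0 < a ^ t * b ^ t := mul_pos (Real.rpow_pos_of_pos ha t) (Real.rpow_pos_of_pos hb t)
  have key := mul_le_mul_of_nonneg_left amgm hab.le
  have e1 : a ^ t * b ^ t * ((u/a) ^ t * (v/b) ^ t) = u ^ t * v ^ t := by
    rw [Real.div_rpow hu ha.le, Real.div_rpow hv hb.le]
    field_simp
  have e2 : a ^ (t-1) = a ^ t / a := by
    rw [Real.rpow_sub ha, Real.rpow_one]
  have e3 : b ^ (t-1) = b ^ t / b := by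
    rw [Real.rpow_sub hb, Real.rpow_one]
  rw [e1] at key
  refine key.trans (le_of_eq ?_)
  rw [e2, e3]
  field_simp
  ring

lemma gRenyi_nonneg {𝒳 : Type*} [Fintype 𝒳] (s : ℝ) (P Q : 𝒳 → ℝ) (hQ : ∀ x, 0 ≤ Q x) :
    0 ≤ gRenyi s P Q :=
  Finset.sum_nonneg fun x hx =>
    mul_nonneg (Real.rpow_nonneg (Finset.mem_filter.mp hx).2.le s) (Real.rpow_nonneg (hQ x) _)

lemma g_expand {𝒜 ℬ : Type*} [Fintype 𝒜] [Fintype ℬ] (s : ℝ) (R : 𝒜 × ℬ → ℝ)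
    (hR : ∀ p, 0 < R p) (QA : 𝒜 → ℝ) (QB : ℬ → ℝ)
    (hQA0 : ∀ a, 0 ≤ QA a) (hQB0 : ∀ b, 0 ≤ QB b) :
    gRenyi s R (fun p => QA p.1 * QB p.2)
      = ∑ a, ∑ b, R (a, b) ^ s * QA a ^ (1 - s) * QB b ^ (1 - s) := by
  rw [gRenyi_pos_eq s R _ hR, Fintype.sum_prod_type]
  exact Finset.sum_congr rfl fun a _ => Finset.sum_congr rfl fun b _ => by
    rw [Real.mul_rpow (hQA0 a) (hQB0 b)]; ring

lemma univ_nonempty_of_sum_one {𝒳 : Type*} [Fintype 𝒳] {f : 𝒳 → ℝ} (h : ∑ x, f x = 1) :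
    (univ : Finset 𝒳).Nonempty := by
  by_contra hc
  rw [Finset.not_nonempty_iff_eq_empty] at hc
  rw [hc, Finset.sum_empty] at h
  norm_num at h

lemma exists_pos_of_sum_one {𝒳 : Type*} [Fintype 𝒳] {f : 𝒳 → ℝ}
    (h0 : ∀ x, 0 ≤ f x) (h : ∑ x, f x = 1) : ∃ x, 0 < f x := by
  by_contra hc
  push_neg at hc
  have hz : ∀ x ∈ (univ : Finset 𝒳), f x = 0 := fun x _ => le_antisymm (hc x) (h0 x)
  rw [Finset.sum_congr rfl hz, Finset.sum_const_zero] at h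
  norm_num at h

/-- The fixed point is optimal (maximizes g) for s ∈ (1/2, 1). -/
lemma opt_lt1 {𝒜 ℬ : Type*} [Fintype 𝒜] [Fintype ℬ] {s : ℝ} (hs1 : 1/2 < s) (hs2 : s < 1)
    (R : 𝒜 × ℬ → ℝ) (hR : ∀ p, 0 < R p)
    {QhA : 𝒜 → ℝ} {QhB : ℬ → ℝ}
    (hQhApos : ∀ a, 0 < QhA a) (hQhBpos : ∀ b, 0 < QhB b)
    (hQhA1 : ∑ a, QhA a = 1) (hQhB1 : ∑ b, QhB b = 1)
    {cA cB : ℝ} (hcA : 0 < cA) (hcB : 0 < cB)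
    (hA : ∀ a, QhA a = cA * (∑ b, R (a, b) ^ s * QhB b ^ (1 - s)) ^ s⁻¹)
    (hB : ∀ b, QhB b = cB * (∑ a, R (a, b) ^ s * QhA a ^ (1 - s)) ^ s⁻¹)
    {QA : 𝒜 → ℝ} {QB : ℬ → ℝ} (hQA0 : ∀ a, 0 ≤ QA a) (hQA1 : ∑ a, QA a = 1)
    (hQB0 : ∀ b, 0 ≤ QB b) (hQB1 : ∑ b, QB b = 1) :
    ∑ a, ∑ b, R (a, b) ^ s * QA a ^ (1 - s) * QB b ^ (1 - s)
      ≤ ∑ a, ∑ b, R (a, b) ^ s * QhA a ^ (1 - s) * QhB b ^ (1 - s) := by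
  have hs0 : (0 : ℝ) < s := by linarith
  have ht0 : 0 < 1 - s := by linarith
  have ht : 1 - s ≤ 1/2 := by linarith
  have hts : 1 - s - 1 = -s := by ring
  -- gradient is constant at the fixed point
  have keyA : ∀ a, (∑ b, R (a, b) ^ s * QhB b ^ (1 - s)) * QhA a ^ (1 - s - 1)
      = (cA ^ s)⁻¹ := by
    intro a
    have hS0 : 0 ≤ ∑ b, R (a, b) ^ s * QhB b ^ (1 - s) :=
      Finset.sum_nonneg fun b _ =>
        mul_nonneg (Real.rpow_nonneg (hR _).le s) (Real.rpow_nonneg (hQhBpos b).le _)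
    have h1 : (∑ b, R (a, b) ^ s * QhB b ^ (1 - s)) = (QhA a / cA) ^ s := by
      have h2 : (∑ b, R (a, b) ^ s * QhB b ^ (1 - s)) ^ s⁻¹ = QhA a / cA := by
        rw [hA a]; field_simp
      calc (∑ b, R (a, b) ^ s * QhB b ^ (1 - s))
          = ((∑ b, R (a, b) ^ s * QhB b ^ (1 - s)) ^ s⁻¹) ^ s := by
            rw [← Real.rpow_mul hS0, inv_mul_cancel₀ hs0.ne', Real.rpow_one]
        _ = (QhA a / cA) ^ s := by rw [h2]
    rw [h1, hts, Real.rpow_neg (hQhApos a).le, Real.div_rpow (hQhApos a).le hcA.le]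
    have h3 : (QhA a ^ s) ≠ 0 := (Real.rpow_pos_of_pos (hQhApos a) s).ne'
    field_simp
  have keyB : ∀ b, (∑ a, R (a, b) ^ s * QhA a ^ (1 - s)) * QhB b ^ (1 - s - 1)
      = (cB ^ s)⁻¹ := by
    intro b
    have hS0 : 0 ≤ ∑ a, R (a, b) ^ s * QhA a ^ (1 - s) :=
      Finset.sum_nonneg fun a _ =>
        mul_nonneg (Real.rpow_nonneg (hR _).le s) (Real.rpow_nonneg (hQhApos a).le _)
    have h1 : (∑ a, R (a, b) ^ s * QhA a ^ (1 - s)) = (QhB b / cB) ^ s := by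
      have h2 : (∑ a, R (a, b) ^ s * QhA a ^ (1 - s)) ^ s⁻¹ = QhB b / cB := by
        rw [hB b]; field_simp
      calc (∑ a, R (a, b) ^ s * QhA a ^ (1 - s))
          = ((∑ a, R (a, b) ^ s * QhA a ^ (1 - s)) ^ s⁻¹) ^ s := by
            rw [← Real.rpow_mul hS0, inv_mul_cancel₀ hs0.ne', Real.rpow_one]
        _ = (QhB b / cB) ^ s := by rw [h2]
    rw [h1, hts, Real.rpow_neg (hQhBpos b).le, Real.div_rpow (hQhBpos b).le hcB.le]
    have h3 : (QhB b ^ s) ≠ 0 := (Real.rpow_pos_of_pos (hQhBpos b) s).ne'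
    field_simp
  -- pointwise tangent bound
  have key : ∀ a b, R (a, b) ^ s * QA a ^ (1 - s) * QB b ^ (1 - s) ≤
      R (a, b) ^ s * QhA a ^ (1 - s) * QhB b ^ (1 - s)
      + (1 - s) * (QhA a ^ (1 - s - 1) * (QA a - QhA a)) * (R (a, b) ^ s * QhB b ^ (1 - s))
      + (1 - s) * (QhB b ^ (1 - s - 1) * (QB b - QhB b)) * (R (a, b) ^ s * QhA a ^ (1 - s)) := by
    intro a b
    have h := tangent ht0 ht (hQhApos a) (hQhBpos b) (hQA0 a) (hQB0 b)
    have h2 := mul_le_mul_of_nonneg_left h (Real.rpow_nonneg (hR (a, b)).le s)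
    calc R (a, b) ^ s * QA a ^ (1 - s) * QB b ^ (1 - s)
        = R (a, b) ^ s * (QA a ^ (1 - s) * QB b ^ (1 - s)) := by ring
      _ ≤ R (a, b) ^ s * (QhA a ^ (1 - s) * QhB b ^ (1 - s)
            + (1 - s) * (QhA a ^ (1 - s - 1) * (QA a - QhA a)) * QhB b ^ (1 - s)
            + (1 - s) * (QhB b ^ (1 - s - 1) * (QB b - QhB b)) * QhA a ^ (1 - s)) := h2
      _ = _ := by ring
  have hsum : ∑ a, ∑ b, R (a, b) ^ s * QA a ^ (1 - s) * QB b ^ (1 - s)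
      ≤ ∑ a, ∑ b, (R (a, b) ^ s * QhA a ^ (1 - s) * QhB b ^ (1 - s)
      + (1 - s) * (QhA a ^ (1 - s - 1) * (QA a - QhA a)) * (R (a, b) ^ s * QhB b ^ (1 - s))
      + (1 - s) * (QhB b ^ (1 - s - 1) * (QB b - QhB b)) * (R (a, b) ^ s * QhA a ^ (1 - s))) :=
    Finset.sum_le_sum fun a _ => Finset.sum_le_sum fun b _ => key a b
  refine hsum.trans (le_of_eq ?_)
  have hY : ∑ a, ∑ b,
      (1 - s) * (QhA a ^ (1 - s - 1) * (QA a - QhA a)) * (R (a, b) ^ s * QhB b ^ (1 - s)) = 0 := by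
    have h1 : ∀ a, ∑ b,
        (1 - s) * (QhA a ^ (1 - s - 1) * (QA a - QhA a)) * (R (a, b) ^ s * QhB b ^ (1 - s))
        = (1 - s) * (cA ^ s)⁻¹ * (QA a - QhA a) := by
      intro a
      rw [← Finset.mul_sum]
      rw [show (1 - s) * (QhA a ^ (1 - s - 1) * (QA a - QhA a))
            * (∑ b, R (a, b) ^ s * QhB b ^ (1 - s))
          = (1 - s) * ((∑ b, R (a, b) ^ s * QhB b ^ (1 - s)) * QhA a ^ (1 - s - 1))
            * (QA a - QhA a) from by ring, keyA a]
    rw [Finset.sum_congr rfl fun a _ => h1 a, ← Finset.mul_sum, Finset.sum_sub_distrib,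
      hQA1, hQhA1, sub_self, mul_zero]
  have hZ : ∑ a, ∑ b,
      (1 - s) * (QhB b ^ (1 - s - 1) * (QB b - QhB b)) * (R (a, b) ^ s * QhA a ^ (1 - s)) = 0 := by
    rw [Finset.sum_comm]
    have h1 : ∀ b, ∑ a,
        (1 - s) * (QhB b ^ (1 - s - 1) * (QB b - QhB b)) * (R (a, b) ^ s * QhA a ^ (1 - s))
        = (1 - s) * (cB ^ s)⁻¹ * (QB b - QhB b) := by
      intro b
      rw [← Finset.mul_sum]
      rw [show (1 - s) * (QhB b ^ (1 - s - 1) * (QB b - QhB b))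
            * (∑ a, R (a, b) ^ s * QhA a ^ (1 - s))
          = (1 - s) * ((∑ a, R (a, b) ^ s * QhA a ^ (1 - s)) * QhB b ^ (1 - s - 1))
            * (QB b - QhB b) from by ring, keyB b]
    rw [Finset.sum_congr rfl fun b _ => h1 b, ← Finset.mul_sum, Finset.sum_sub_distrib,
      hQB1, hQhB1, sub_self, mul_zero]
  simp only [Finset.sum_add_distrib]
  rw [hY, hZ, add_zero, add_zero]

lemma inf_lt1 {𝒜 ℬ : Type*} [Fintype 𝒜] [Fintype ℬ] {s : ℝ} (hs1 : 1/2 < s) (hs2 : s < 1)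
    (R : 𝒜 × ℬ → ℝ) (hR : ∀ p, 0 < R p)
    {QhA : 𝒜 → ℝ} {QhB : ℬ → ℝ}
    (hQhApos : ∀ a, 0 < QhA a) (hQhBpos : ∀ b, 0 < QhB b)
    (hQhA1 : ∑ a, QhA a = 1) (hQhB1 : ∑ b, QhB b = 1)
    {cA cB : ℝ} (hcA : 0 < cA) (hcB : 0 < cB)
    (hA : ∀ a, QhA a = cA * (∑ b, R (a, b) ^ s * QhB b ^ (1 - s)) ^ s⁻¹)
    (hB : ∀ b, QhB b = cB * (∑ a, R (a, b) ^ s * QhA a ^ (1 - s)) ^ s⁻¹) :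
    sInf ((fun QQ : ((𝒜 → ℝ) × (ℬ → ℝ)) => DRenyi s R (fun p => QQ.1 p.1 * QQ.2 p.2)) ''
        {QQ | (∀ x, 0 ≤ QQ.1 x) ∧ (∑ x, QQ.1 x = 1) ∧ (∀ y, 0 ≤ QQ.2 y) ∧ (∑ y, QQ.2 y = 1)})
      = DRenyi s R (fun p => QhA p.1 * QhB p.2) := by
  have hlow : ∀ z ∈ ((fun QQ : ((𝒜 → ℝ) × (ℬ → ℝ)) =>
      DRenyi s R (fun p => QQ.1 p.1 * QQ.2 p.2)) ''
      {QQ | (∀ x, 0 ≤ QQ.1 x) ∧ (∑ x, QQ.1 x = 1) ∧ (∀ y, 0 ≤ QQ.2 y) ∧ (∑ y, QQ.2 y = 1)}),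
      DRenyi s R (fun p => QhA p.1 * QhB p.2) ≤ z := by
    rintro z ⟨⟨QA, QB⟩, ⟨h1, h2, h3, h4⟩, rfl⟩
    have hgle : gRenyi s R (fun p => QA p.1 * QB p.2)
        ≤ gRenyi s R (fun p => QhA p.1 * QhB p.2) := by
      rw [g_expand s R hR QA QB h1 h3,
          g_expand s R hR QhA QhB (fun a => (hQhApos a).le) (fun b => (hQhBpos b).le)]
      exact opt_lt1 hs1 hs2 R hR hQhApos hQhBpos hQhA1 hQhB1 hcA hcB hA hB h1 h2 h3 h4
    have hgpos : 0 < gRenyi s R (fun p => QA p.1 * QB p.2) := by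
      rw [g_expand s R hR QA QB h1 h3]
      obtain ⟨a₀, ha₀⟩ := exists_pos_of_sum_one h1 h2
      obtain ⟨b₀, hb₀⟩ := exists_pos_of_sum_one h3 h4
      refine Finset.sum_pos' (fun a _ => Finset.sum_nonneg fun b _ =>
        mul_nonneg (mul_nonneg (Real.rpow_nonneg (hR _).le s) (Real.rpow_nonneg (h1 a) _))
          (Real.rpow_nonneg (h3 b) _)) ⟨a₀, Finset.mem_univ _, ?_⟩
      refine Finset.sum_pos' (fun b _ =>
        mul_nonneg (mul_nonneg (Real.rpow_nonneg (hR _).le s) (Real.rpow_nonneg (h1 a₀) _))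
          (Real.rpow_nonneg (h3 b) _)) ⟨b₀, Finset.mem_univ _, ?_⟩
      exact mul_pos (mul_pos (Real.rpow_pos_of_pos (hR _) s)
        (Real.rpow_pos_of_pos ha₀ _)) (Real.rpow_pos_of_pos hb₀ _)
    show (s - 1)⁻¹ * Real.log (gRenyi s R (fun p => QhA p.1 * QhB p.2))
      ≤ (s - 1)⁻¹ * Real.log (gRenyi s R (fun p => QA p.1 * QB p.2))
    exact mul_le_mul_of_nonpos_left (Real.log_le_log hgpos hgle)
      (inv_nonpos.mpr (by linarith))
  have hmem : DRenyi s R (fun p => QhA p.1 * QhB p.2) ∈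
      ((fun QQ : ((𝒜 → ℝ) × (ℬ → ℝ)) => DRenyi s R (fun p => QQ.1 p.1 * QQ.2 p.2)) ''
      {QQ | (∀ x, 0 ≤ QQ.1 x) ∧ (∑ x, QQ.1 x = 1) ∧ (∀ y, 0 ≤ QQ.2 y) ∧ (∑ y, QQ.2 y = 1)}) :=
    ⟨(QhA, QhB), ⟨fun a => (hQhApos a).le, hQhA1, fun b => (hQhBpos b).le, hQhB1⟩, rfl⟩
  exact le_antisymm (csInf_le ⟨_, hlow⟩ hmem) (le_csInf ⟨_, hmem⟩ hlow)

lemma inf_gt1 {𝒜 ℬ : Type*} [Fintype 𝒜] [Fintype ℬ] {s : ℝ} (hs : 1 < s)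
    (R : 𝒜 × ℬ → ℝ) (hR : ∀ p, 0 < R p) (w₀ : 𝒜 × ℬ) (hmin : ∀ w, R w₀ ≤ R w) :
    sInf ((fun QQ : ((𝒜 → ℝ) × (ℬ → ℝ)) => DRenyi s R (fun p => QQ.1 p.1 * QQ.2 p.2)) ''
        {QQ | (∀ x, 0 ≤ QQ.1 x) ∧ (∑ x, QQ.1 x = 1) ∧ (∀ y, 0 ≤ QQ.2 y) ∧ (∑ y, QQ.2 y = 1)})
      = (s - 1)⁻¹ * Real.log (R w₀ ^ s) := by
  classical
  have hts : (1 : ℝ) - s ≠ 0 := by linarith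
  have hlow : ∀ z ∈ ((fun QQ : ((𝒜 → ℝ) × (ℬ → ℝ)) =>
      DRenyi s R (fun p => QQ.1 p.1 * QQ.2 p.2)) ''
      {QQ | (∀ x, 0 ≤ QQ.1 x) ∧ (∑ x, QQ.1 x = 1) ∧ (∀ y, 0 ≤ QQ.2 y) ∧ (∑ y, QQ.2 y = 1)}),
      (s - 1)⁻¹ * Real.log (R w₀ ^ s) ≤ z := by
    rintro z ⟨⟨QA, QB⟩, ⟨h1, h2, h3, h4⟩, rfl⟩
    obtain ⟨a₀, ha₀⟩ := exists_pos_of_sum_one h1 h2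
    obtain ⟨b₀, hb₀⟩ := exists_pos_of_sum_one h3 h4
    have ha1 : QA a₀ ≤ 1 := by
      rw [← h2]; exact Finset.single_le_sum (fun i _ => h1 i) (Finset.mem_univ a₀)
    have hb1 : QB b₀ ≤ 1 := by
      rw [← h4]; exact Finset.single_le_sum (fun i _ => h3 i) (Finset.mem_univ b₀)
    have hterm : R w₀ ^ s ≤ R (a₀, b₀) ^ s * (QA a₀ * QB b₀) ^ (1 - s) := by
      have e1 : 1 ≤ (QA a₀ * QB b₀) ^ (1 - s) :=
        Real.one_le_rpow_of_pos_of_le_one_of_nonpos (mul_pos ha₀ hb₀)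
          (mul_le_one₀ ha1 hb₀.le hb1) (by linarith)
      have e2 : R w₀ ^ s ≤ R (a₀, b₀) ^ s :=
        Real.rpow_le_rpow (hR w₀).le (hmin _) (by linarith)
      calc R w₀ ^ s = R w₀ ^ s * 1 := (mul_one _).symm
        _ ≤ R (a₀, b₀) ^ s * (QA a₀ * QB b₀) ^ (1 - s) :=
          mul_le_mul e2 e1 zero_le_one (Real.rpow_nonneg (hR _).le s)
    have hg : R w₀ ^ s ≤ gRenyi s R (fun p => QA p.1 * QB p.2) := by
      rw [gRenyi_pos_eq s R _ hR]
      exact hterm.trans (Finset.single_le_sum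
        (f := fun p : 𝒜 × ℬ => R p ^ s * (QA p.1 * QB p.2) ^ (1 - s))
        (fun p _ => mul_nonneg (Real.rpow_nonneg (hR p).le s)
          (Real.rpow_nonneg (mul_nonneg (h1 p.1) (h3 p.2)) _)) (Finset.mem_univ (a₀, b₀)))
    show (s - 1)⁻¹ * Real.log (R w₀ ^ s)
      ≤ (s - 1)⁻¹ * Real.log (gRenyi s R (fun p => QA p.1 * QB p.2))
    exact mul_le_mul_of_nonneg_left
      (Real.log_le_log (Real.rpow_pos_of_pos (hR w₀) s) hg)
      (inv_nonneg.mpr (by linarith))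
  have hmem : (s - 1)⁻¹ * Real.log (R w₀ ^ s) ∈
      ((fun QQ : ((𝒜 → ℝ) × (ℬ → ℝ)) => DRenyi s R (fun p => QQ.1 p.1 * QQ.2 p.2)) ''
      {QQ | (∀ x, 0 ≤ QQ.1 x) ∧ (∑ x, QQ.1 x = 1) ∧ (∀ y, 0 ≤ QQ.2 y) ∧ (∑ y, QQ.2 y = 1)}) := by
    refine ⟨((fun a => if a = w₀.1 then (1:ℝ) else 0), (fun b => if b = w₀.2 then (1:ℝ) else 0)),
      ⟨fun a => by dsimp only; split <;> norm_num,
       by simp,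
       fun b => by dsimp only; split <;> norm_num,
       by simp⟩, ?_⟩
    show (s - 1)⁻¹ * Real.log (gRenyi s R _) = _
    congr 2
    rw [gRenyi_pos_eq s R _ hR]
    rw [Finset.sum_eq_single w₀]
    · simp
    · intro p _ hp
      have hz : (if p.1 = w₀.1 then (1:ℝ) else 0) * (if p.2 = w₀.2 then (1:ℝ) else 0) = 0 := by
        by_cases hp1 : p.1 = w₀.1
        · have hp2 : p.2 ≠ w₀.2 := fun h => hp (Prod.ext hp1 h)
          simp [hp2]
        · simp [hp1]
      rw [hz, Real.zero_rpow hts, mul_zero]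
    · intro h; exact absurd (Finset.mem_univ w₀) h
  exact le_antisymm (csInf_le ⟨_, hlow⟩ hmem) (le_csInf ⟨_, hmem⟩ hlow)

set_option maxHeartbeats 2000000 in
/-- Fixed points of the alternating optimization are optimal: if Q̂_X, Q̂_Y satisfy the
self-consistency relations Q̂_X(x) ∝ P_X(x)·g_s(P_{Y|X=x}‖Q̂_Y)^{1/s} and
Q̂_Y(y) ∝ P_Y(y)·g_s(P_{X|Y=y}‖Q̂_X)^{1/s} for s ∈ (1/2,1)∪(1,∞), then the 2-fold
products satisfy the corresponding self-consistency relations for P^{×2}, and the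
minimum over product alternatives is additive:
D_s(P^{×2}‖𝒬₂) = 2·min_{Q_X,Q_Y} D_s(P‖Q_X×Q_Y). -/
theorem fixed_point_optimal_additive {𝒳 𝒴 : Type*} [Fintype 𝒳] [Fintype 𝒴]
    (P : 𝒳 × 𝒴 → ℝ) (s : ℝ) (hs : s ∈ Set.Ioo (1/2 : ℝ) 1 ∪ Set.Ioi 1)
    (hP : ∀ p, 0 < P p) (hP1 : ∑ p, P p = 1)
    (QhX : 𝒳 → ℝ) (QhY : 𝒴 → ℝ)
    (hQhX0 : ∀ x, 0 ≤ QhX x) (hQhX1 : ∑ x, QhX x = 1)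
    (hQhY0 : ∀ y, 0 ≤ QhY y) (hQhY1 : ∑ y, QhY y = 1)
    (hscX : ∃ cX : ℝ, 0 < cX ∧ ∀ x, QhX x =
      cX * (∑ y, P (x, y)) *
        (gRenyi s (fun y => P (x, y) / ∑ y', P (x, y')) QhY) ^ s⁻¹)
    (hscY : ∃ cY : ℝ, 0 < cY ∧ ∀ y, QhY y =
      cY * (∑ x, P (x, y)) *
        (gRenyi s (fun x => P (x, y) / ∑ x', P (x', y)) QhX) ^ s⁻¹) :
    ((∃ c : ℝ, 0 < c ∧ ∀ x : 𝒳 × 𝒳, QhX x.1 * QhX x.2 =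
        c * ((∑ y, P (x.1, y)) * (∑ y, P (x.2, y))) *
          (gRenyi s
            (fun y : 𝒴 × 𝒴 =>
              (P (x.1, y.1) / ∑ y', P (x.1, y')) * (P (x.2, y.2) / ∑ y', P (x.2, y')))
            (fun y : 𝒴 × 𝒴 => QhY y.1 * QhY y.2)) ^ s⁻¹) ∧
      (∃ c : ℝ, 0 < c ∧ ∀ y : 𝒴 × 𝒴, QhY y.1 * QhY y.2 =
        c * ((∑ x, P (x, y.1)) * (∑ x, P (x, y.2))) *
          (gRenyi s
            (fun x : 𝒳 × 𝒳 =>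
              (P (x.1, y.1) / ∑ x', P (x', y.1)) * (P (x.2, y.2) / ∑ x', P (x', y.2)))
            (fun x : 𝒳 × 𝒳 => QhX x.1 * QhX x.2)) ^ s⁻¹)) ∧
    sInf ((fun AB : ((𝒳 × 𝒳 → ℝ) × (𝒴 × 𝒴 → ℝ)) =>
          DRenyi s (fun w : (𝒳 × 𝒴) × (𝒳 × 𝒴) => P w.1 * P w.2)
            (fun w => AB.1 (w.1.1, w.2.1) * AB.2 (w.1.2, w.2.2))) ''
        {AB | (∀ x, 0 ≤ AB.1 x) ∧ (∑ x, AB.1 x = 1) ∧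
              (∀ y, 0 ≤ AB.2 y) ∧ (∑ y, AB.2 y = 1)})
      = 2 * sInf ((fun QQ : ((𝒳 → ℝ) × (𝒴 → ℝ)) =>
          DRenyi s P (fun p => QQ.1 p.1 * QQ.2 p.2)) ''
        {QQ | (∀ x, 0 ≤ QQ.1 x) ∧ (∑ x, QQ.1 x = 1) ∧
              (∀ y, 0 ≤ QQ.2 y) ∧ (∑ y, QQ.2 y = 1)}) := by
  obtain ⟨cX, hcX, hX⟩ := hscX
  obtain ⟨cY, hcY, hY⟩ := hscY
  have hshalf : 1/2 < s := by
    rcases hs with h | h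
    · exact h.1
    · change 1 < s at h; linarith
  have hs0 : (0:ℝ) < s := by linarith
  have hsne : s ≠ 0 := hs0.ne'
  haveI hXne : Nonempty 𝒳 := by
    by_contra h
    rw [not_nonempty_iff] at h
    rw [Finset.univ_eq_empty, Finset.sum_empty] at hQhX1
    norm_num at hQhX1
  haveI hYne : Nonempty 𝒴 := by
    by_contra h
    rw [not_nonempty_iff] at h
    rw [Finset.univ_eq_empty, Finset.sum_empty] at hQhY1
    norm_num at hQhY1
  have hPX : ∀ x, 0 < ∑ y, P (x, y) :=
    fun x => Finset.sum_pos (fun y _ => hP _) Finset.univ_nonempty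
  have hPY : ∀ y, 0 < ∑ x, P (x, y) :=
    fun y => Finset.sum_pos (fun x _ => hP _) Finset.univ_nonempty
  -- conditional g's in terms of unnormalized sums
  have hgx : ∀ x, gRenyi s (fun y => P (x, y) / ∑ y', P (x, y')) QhY
      = (∑ y, P (x, y) ^ s * QhY y ^ (1 - s)) / (∑ y', P (x, y')) ^ s := by
    intro x
    rw [gRenyi_pos_eq s _ _ (fun y => div_pos (hP _) (hPX x)), Finset.sum_div]
    refine Finset.sum_congr rfl fun y _ => ?_
    rw [Real.div_rpow (hP _).le (hPX x).le]
    ring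
  have hgy : ∀ y, gRenyi s (fun x => P (x, y) / ∑ x', P (x', y)) QhX
      = (∑ x, P (x, y) ^ s * QhX x ^ (1 - s)) / (∑ x', P (x', y)) ^ s := by
    intro y
    rw [gRenyi_pos_eq s _ _ (fun x => div_pos (hP _) (hPY y)), Finset.sum_div]
    refine Finset.sum_congr rfl fun x _ => ?_
    rw [Real.div_rpow (hP _).le (hPY y).le]
    ring
  -- normalized fixed point equations
  have hAx : ∀ x, QhX x = cX * (∑ y, P (x, y) ^ s * QhY y ^ (1 - s)) ^ s⁻¹ := by
    intro x
    have hS0 : 0 ≤ ∑ y, P (x, y) ^ s * QhY y ^ (1 - s) :=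
      Finset.sum_nonneg fun y _ =>
        mul_nonneg (Real.rpow_nonneg (hP _).le s) (Real.rpow_nonneg (hQhY0 y) _)
    have hpow : (((∑ y', P (x, y')) ^ s) ^ s⁻¹) = ∑ y', P (x, y') := by
      rw [← Real.rpow_mul (hPX x).le, mul_inv_cancel₀ hsne, Real.rpow_one]
    have hT : (∑ y', P (x, y')) ≠ 0 := (hPX x).ne'
    rw [hX x, hgx x, Real.div_rpow hS0 (Real.rpow_nonneg (hPX x).le s), hpow]
    linear_combination cX * (∑ y, P (x, y) ^ s * QhY y ^ (1 - s)) ^ s⁻¹ * div_self hT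
  have hBy : ∀ y, QhY y = cY * (∑ x, P (x, y) ^ s * QhX x ^ (1 - s)) ^ s⁻¹ := by
    intro y
    have hS0 : 0 ≤ ∑ x, P (x, y) ^ s * QhX x ^ (1 - s) :=
      Finset.sum_nonneg fun x _ =>
        mul_nonneg (Real.rpow_nonneg (hP _).le s) (Real.rpow_nonneg (hQhX0 x) _)
    have hpow : (((∑ x', P (x', y)) ^ s) ^ s⁻¹) = ∑ x', P (x', y) := by
      rw [← Real.rpow_mul (hPY y).le, mul_inv_cancel₀ hsne, Real.rpow_one]
    have hT : (∑ x', P (x', y)) ≠ 0 := (hPY y).ne'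
    rw [hY y, hgy y, Real.div_rpow hS0 (Real.rpow_nonneg (hPY y).le s), hpow]
    linear_combination cY * (∑ x, P (x, y) ^ s * QhX x ^ (1 - s)) ^ s⁻¹ * div_self hT
  -- positivity of the fixed point
  obtain ⟨x₀, hx₀⟩ := exists_pos_of_sum_one hQhX0 hQhX1
  have hQhYpos : ∀ y, 0 < QhY y := by
    intro y
    rw [hBy y]
    refine mul_pos hcY (Real.rpow_pos_of_pos ?_ _)
    exact Finset.sum_pos' (fun x _ => mul_nonneg (Real.rpow_nonneg (hP _).le s)
      (Real.rpow_nonneg (hQhX0 x) _))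
      ⟨x₀, Finset.mem_univ _, mul_pos (Real.rpow_pos_of_pos (hP _) s)
        (Real.rpow_pos_of_pos hx₀ _)⟩
  have hQhXpos : ∀ x, 0 < QhX x := by
    intro x
    rw [hAx x]
    refine mul_pos hcX (Real.rpow_pos_of_pos ?_ _)
    exact Finset.sum_pos (fun y _ => mul_pos (Real.rpow_pos_of_pos (hP _) s)
      (Real.rpow_pos_of_pos (hQhYpos y) _)) Finset.univ_nonempty
  constructor
  · -- Part A : product self-consistency
    constructor
    · refine ⟨cX ^ 2, by positivity, fun x => ?_⟩
      have e : gRenyi s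
          (fun y : 𝒴 × 𝒴 =>
            (P (x.1, y.1) / ∑ y', P (x.1, y')) * (P (x.2, y.2) / ∑ y', P (x.2, y')))
          (fun y : 𝒴 × 𝒴 => QhY y.1 * QhY y.2)
          = gRenyi s (fun y => P (x.1, y) / ∑ y', P (x.1, y')) QhY
            * gRenyi s (fun y => P (x.2, y) / ∑ y', P (x.2, y')) QhY :=
        gRenyi_prod (f1 := fun y => P (x.1, y) / ∑ y', P (x.1, y'))
          (f2 := fun y => P (x.2, y) / ∑ y', P (x.2, y')) s
          (fun y => div_pos (hP (x.1, y)) (hPX x.1))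
          (fun y => div_pos (hP (x.2, y)) (hPX x.2)) hQhY0 hQhY0
      rw [e, Real.mul_rpow (gRenyi_nonneg s _ _ hQhY0) (gRenyi_nonneg s _ _ hQhY0),
        hX x.1, hX x.2]
      ring
    · refine ⟨cY ^ 2, by positivity, fun y => ?_⟩
      have e : gRenyi s
          (fun x : 𝒳 × 𝒳 =>
            (P (x.1, y.1) / ∑ x', P (x', y.1)) * (P (x.2, y.2) / ∑ x', P (x', y.2)))
          (fun x : 𝒳 × 𝒳 => QhX x.1 * QhX x.2)
          = gRenyi s (fun x => P (x, y.1) / ∑ x', P (x', y.1)) QhX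
            * gRenyi s (fun x => P (x, y.2) / ∑ x', P (x', y.2)) QhX :=
        gRenyi_prod (f1 := fun x => P (x, y.1) / ∑ x', P (x', y.1))
          (f2 := fun x => P (x, y.2) / ∑ x', P (x', y.2)) s
          (fun x => div_pos (hP (x, y.1)) (hPY y.1))
          (fun x => div_pos (hP (x, y.2)) (hPY y.2)) hQhX0 hQhX0
      rw [e, Real.mul_rpow (gRenyi_nonneg s _ _ hQhX0) (gRenyi_nonneg s _ _ hQhX0),
        hY y.1, hY y.2]
      ring
  -- Part B : additivity of the optimum
  have hR'pos : ∀ p : (𝒳 × 𝒳) × (𝒴 × 𝒴), 0 < P (p.1.1, p.2.1) * P (p.1.2, p.2.2) :=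
    fun p => mul_pos (hP _) (hP _)
  have hfun : (fun AB : ((𝒳 × 𝒳 → ℝ) × (𝒴 × 𝒴 → ℝ)) =>
        DRenyi s (fun w : (𝒳 × 𝒴) × (𝒳 × 𝒴) => P w.1 * P w.2)
          (fun w => AB.1 (w.1.1, w.2.1) * AB.2 (w.1.2, w.2.2)))
      = (fun AB : ((𝒳 × 𝒳 → ℝ) × (𝒴 × 𝒴 → ℝ)) =>
        DRenyi s (fun p : (𝒳 × 𝒳) × (𝒴 × 𝒴) => P (p.1.1, p.2.1) * P (p.1.2, p.2.2))
          (fun p => AB.1 p.1 * AB.2 p.2)) := by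
    funext AB
    unfold DRenyi
    congr 2
    rw [gRenyi_pos_eq s _ _ (fun w : (𝒳 × 𝒴) × (𝒳 × 𝒴) => mul_pos (hP w.1) (hP w.2)),
      gRenyi_pos_eq s _ _ hR'pos]
    exact Fintype.sum_equiv (Equiv.prodProdProdComm 𝒳 𝒴 𝒳 𝒴) _ _ (fun w => rfl)
  rw [hfun]
  rcases hs with hlt | hgt
  · -- case 1/2 < s < 1
    obtain ⟨hs1, hs2⟩ := hlt
    -- product fixed point data
    have hA2 : ∀ a : 𝒳 × 𝒳, QhX a.1 * QhX a.2
        = cX ^ 2 * (∑ b : 𝒴 × 𝒴, (P (a.1, b.1) * P (a.2, b.2)) ^ s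
            * (QhY b.1 * QhY b.2) ^ (1 - s)) ^ s⁻¹ := by
      intro a
      have hsum2 : ∑ b : 𝒴 × 𝒴, (P (a.1, b.1) * P (a.2, b.2)) ^ s
          * (QhY b.1 * QhY b.2) ^ (1 - s)
          = (∑ y, P (a.1, y) ^ s * QhY y ^ (1 - s)) * (∑ y, P (a.2, y) ^ s * QhY y ^ (1 - s)) := by
        rw [← sum_mul_split (fun y => P (a.1, y) ^ s * QhY y ^ (1 - s))
          (fun y => P (a.2, y) ^ s * QhY y ^ (1 - s))]
        refine Finset.sum_congr rfl fun b _ => ?_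
        rw [Real.mul_rpow (hP _).le (hP _).le, Real.mul_rpow (hQhY0 b.1) (hQhY0 b.2)]
        ring
      have hS1 : 0 ≤ ∑ y, P (a.1, y) ^ s * QhY y ^ (1 - s) :=
        Finset.sum_nonneg fun y _ =>
          mul_nonneg (Real.rpow_nonneg (hP _).le s) (Real.rpow_nonneg (hQhY0 y) _)
      have hS2 : 0 ≤ ∑ y, P (a.2, y) ^ s * QhY y ^ (1 - s) :=
        Finset.sum_nonneg fun y _ =>
          mul_nonneg (Real.rpow_nonneg (hP _).le s) (Real.rpow_nonneg (hQhY0 y) _)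
      rw [hsum2, Real.mul_rpow hS1 hS2, hAx a.1, hAx a.2]
      ring
    have hB2 : ∀ b : 𝒴 × 𝒴, QhY b.1 * QhY b.2
        = cY ^ 2 * (∑ a : 𝒳 × 𝒳, (P (a.1, b.1) * P (a.2, b.2)) ^ s
            * (QhX a.1 * QhX a.2) ^ (1 - s)) ^ s⁻¹ := by
      intro b
      have hsum2 : ∑ a : 𝒳 × 𝒳, (P (a.1, b.1) * P (a.2, b.2)) ^ s
          * (QhX a.1 * QhX a.2) ^ (1 - s)
          = (∑ x, P (x, b.1) ^ s * QhX x ^ (1 - s)) * (∑ x, P (x, b.2) ^ s * QhX x ^ (1 - s)) := by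
        rw [← sum_mul_split (fun x => P (x, b.1) ^ s * QhX x ^ (1 - s))
          (fun x => P (x, b.2) ^ s * QhX x ^ (1 - s))]
        refine Finset.sum_congr rfl fun a _ => ?_
        rw [Real.mul_rpow (hP _).le (hP _).le, Real.mul_rpow (hQhX0 a.1) (hQhX0 a.2)]
        ring
      have hS1 : 0 ≤ ∑ x, P (x, b.1) ^ s * QhX x ^ (1 - s) :=
        Finset.sum_nonneg fun x _ =>
          mul_nonneg (Real.rpow_nonneg (hP _).le s) (Real.rpow_nonneg (hQhX0 x) _)
      have hS2 : 0 ≤ ∑ x, P (x, b.2) ^ s * QhX x ^ (1 - s) :=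
        Finset.sum_nonneg fun x _ =>
          mul_nonneg (Real.rpow_nonneg (hP _).le s) (Real.rpow_nonneg (hQhX0 x) _)
      rw [hsum2, Real.mul_rpow hS1 hS2, hBy b.1, hBy b.2]
      ring
    rw [inf_lt1 hs1 hs2 (fun p : (𝒳 × 𝒳) × (𝒴 × 𝒴) => P (p.1.1, p.2.1) * P (p.1.2, p.2.2))
        hR'pos (QhA := fun a : 𝒳 × 𝒳 => QhX a.1 * QhX a.2)
        (QhB := fun b : 𝒴 × 𝒴 => QhY b.1 * QhY b.2)
        (fun a => mul_pos (hQhXpos a.1) (hQhXpos a.2))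
        (fun b => mul_pos (hQhYpos b.1) (hQhYpos b.2))
        (by rw [sum_mul_split QhX QhX, hQhX1, mul_one])
        (by rw [sum_mul_split QhY QhY, hQhY1, mul_one])
        (by positivity : (0:ℝ) < cX ^ 2) (by positivity : (0:ℝ) < cY ^ 2)
        hA2 hB2,
      inf_lt1 hs1 hs2 P hP hQhXpos hQhYpos hQhX1 hQhY1 hcX hcY hAx hBy]
    -- now: DRenyi of the product fixed point = 2 * DRenyi of fixed point
    have hg1pos : 0 < gRenyi s P (fun p => QhX p.1 * QhY p.2) := by
      rw [gRenyi_pos_eq s P _ hP]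
      exact Finset.sum_pos (fun p _ => mul_pos (Real.rpow_pos_of_pos (hP p) s)
        (Real.rpow_pos_of_pos (mul_pos (hQhXpos p.1) (hQhYpos p.2)) _)) Finset.univ_nonempty
    have hgback : gRenyi s (fun p : (𝒳 × 𝒳) × (𝒴 × 𝒴) => P (p.1.1, p.2.1) * P (p.1.2, p.2.2))
        (fun p => (fun a : 𝒳 × 𝒳 => QhX a.1 * QhX a.2) p.1
          * (fun b : 𝒴 × 𝒴 => QhY b.1 * QhY b.2) p.2)
        = gRenyi s P (fun p => QhX p.1 * QhY p.2) * gRenyi s P (fun p => QhX p.1 * QhY p.2) := by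
      have e1 : gRenyi s (fun p : (𝒳 × 𝒳) × (𝒴 × 𝒴) => P (p.1.1, p.2.1) * P (p.1.2, p.2.2))
          (fun p => (QhX p.1.1 * QhX p.1.2) * (QhY p.2.1 * QhY p.2.2))
          = gRenyi s (fun w : (𝒳 × 𝒴) × (𝒳 × 𝒴) => P w.1 * P w.2)
            (fun w => (QhX w.1.1 * QhY w.1.2) * (QhX w.2.1 * QhY w.2.2)) := by
        rw [gRenyi_pos_eq s _ _ hR'pos,
          gRenyi_pos_eq s _ _ (fun w : (𝒳 × 𝒴) × (𝒳 × 𝒴) => mul_pos (hP w.1) (hP w.2))]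
        refine (Fintype.sum_equiv (Equiv.prodProdProdComm 𝒳 𝒴 𝒳 𝒴) _ _ (fun w => ?_)).symm
        have : QhX w.1.1 * QhY w.1.2 * (QhX w.2.1 * QhY w.2.2)
            = QhX w.1.1 * QhX w.2.1 * (QhY w.1.2 * QhY w.2.2) := by ring
        rw [this]
        rfl
      have e2 : gRenyi s (fun w : (𝒳 × 𝒴) × (𝒳 × 𝒴) => P w.1 * P w.2)
          (fun w => (QhX w.1.1 * QhY w.1.2) * (QhX w.2.1 * QhY w.2.2))
          = gRenyi s P (fun p => QhX p.1 * QhY p.2) * gRenyi s P (fun p => QhX p.1 * QhY p.2) :=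
        gRenyi_prod s hP hP (fun p => mul_nonneg (hQhX0 p.1) (hQhY0 p.2))
          (fun p => mul_nonneg (hQhX0 p.1) (hQhY0 p.2))
      exact e1.trans e2
    unfold DRenyi
    rw [hgback, Real.log_mul hg1pos.ne' hg1pos.ne']
    ring
  · -- case 1 < s
    change 1 < s at hgt
    obtain ⟨p₀, -, hp₀⟩ := Finset.exists_min_image (univ : Finset (𝒳 × 𝒴)) P Finset.univ_nonempty
    have hmin : ∀ p, P p₀ ≤ P p := fun p => hp₀ p (Finset.mem_univ p)
    have hmin2 : ∀ w : (𝒳 × 𝒳) × (𝒴 × 𝒴),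
        P ((((p₀.1, p₀.1), (p₀.2, p₀.2)) : (𝒳 × 𝒳) × (𝒴 × 𝒴)).1.1,
          (((p₀.1, p₀.1), (p₀.2, p₀.2)) : (𝒳 × 𝒳) × (𝒴 × 𝒴)).2.1)
        * P ((((p₀.1, p₀.1), (p₀.2, p₀.2)) : (𝒳 × 𝒳) × (𝒴 × 𝒴)).1.2,
          (((p₀.1, p₀.1), (p₀.2, p₀.2)) : (𝒳 × 𝒳) × (𝒴 × 𝒴)).2.2)
        ≤ P (w.1.1, w.2.1) * P (w.1.2, w.2.2) := by
      intro w
      show P (p₀.1, p₀.2) * P (p₀.1, p₀.2) ≤ _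
      exact mul_le_mul (hmin _) (hmin _) (hP _).le (hP _).le
    rw [inf_gt1 hgt (fun p : (𝒳 × 𝒳) × (𝒴 × 𝒴) => P (p.1.1, p.2.1) * P (p.1.2, p.2.2))
        hR'pos ((p₀.1, p₀.1), (p₀.2, p₀.2)) hmin2,
      inf_gt1 hgt P hP p₀ hmin]
    show (s - 1)⁻¹ * Real.log ((P (p₀.1, p₀.2) * P (p₀.1, p₀.2)) ^ s)
      = 2 * ((s - 1)⁻¹ * Real.log (P p₀ ^ s))
    have hpp : P (p₀.1, p₀.2) = P p₀ := by rw [Prod.mk.eta]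
    rw [hpp, Real.log_rpow (mul_pos (hP p₀) (hP p₀)), Real.log_mul (hP p₀).ne' (hP p₀).ne',
      Real.log_rpow (hP p₀)]
    ring
end
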